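/- Fix an odd integer m > 1. Let c(n) be the number of partitions of n into parts that are either powers of m or twice powers of m, let d(n) = c(m·(n+1) − 1), and let D(q) = ∑_{n≥0} d(n) q^n, viewed as a formal power series over ℤ/mℤ. Then D(q) = (1+q)·(∑_{j=0}^{m−2} C(j+2, 2)·q^{2j}) · D(q^m), where C(j+2, 2) = (j+1)(j+2)/2 is a binomial coefficient. -/

import Mathlib

open PowerSeries

/-- The number of partitions of `n` into parts that are powers of `m` or twice powers of `m`. -/
noncomputable def maryTwicePartitions (m n : ℕ) : ℕ :=
  Nat.card {p : n.Partition // ∀ x ∈ p.parts, ∃ k : ℕ, x = m ^ k ∨ x = 2 * m ^ k}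

/-- Substitution of `q^m` for `q` in a formal power series: `F(q) ↦ F(q^m)`. -/
noncomputable def substPow (R : Type*) [Semiring R] (m : ℕ) (F : PowerSeries R) : PowerSeries R :=
  PowerSeries.mk fun n => if m ∣ n then PowerSeries.coeff (n / m) F else 0

/-!
Write `G = 1 / (1 - q)` and `C(q) = ∑ c(n) q^n`. Removing the parts `1` and `2` from a partition
counted by `c(n)` and dividing the remaining parts by `m` (for `m > 2` these are exactly the parts
divisible by `m`) gives `c(n) = ∑_t (⌊(n - m t) / 2⌋ + 1) c(t)`, that is
`C(q) = G(q) G(q²) C(q^m)`.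

Extracting the coefficients of index `≡ m - 1 (mod m)` commutes with multiplication by a
series in `q^m`, and for odd `m` the extracted series of `G(q) G(q²)` is `(m + 1) / 2 · G(q²)`
modulo `m`. Hence `D(q) = (m + 1) / 2 · G(q²) C(q)`, and after inserting the recurrence the claim
reduces to `(∑_{j < m - 1} C(j + 2, 2) x^j) (1 - x)³ ≡ 1 - x^m (mod m)`: the truncation
error of `∑ C(j + 2, 2) x^j = 1 / (1 - x)³` has coefficients `C(m + 1, 2) ≡ 0`,
`(m - 1)(m + 1) ≡ -1` and `C(m, 2) ≡ 0`.
-/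

theorem substPow_eq_expand {R : Type*} [CommRing R] {m : ℕ} (hm : m ≠ 0) (F : R⟦X⟧) :
    substPow R m F = expand m hm F := by
  ext n
  rw [substPow, coeff_mk, coeff_expand]

theorem lt_div_add_one_iff_mul_le {m n t : ℕ} (hm : 0 < m) : t < n / m + 1 ↔ m * t ≤ n := by
  rw [Nat.lt_succ_iff, Nat.le_div_iff_mul_le hm, mul_comm]

section expand
variable {R : Type*} [CommRing R] {m : ℕ} (hm : m ≠ 0)

theorem coeff_mul_expand (F G : R⟦X⟧) (n : ℕ) :
    coeff n (F * expand m hm G) =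
      ∑ t ∈ Finset.range (n / m + 1), coeff (n - m * t) F * coeff t G := by
  have hm' : 0 < m := Nat.pos_of_ne_zero hm
  rw [coeff_mul]
  refine (Finset.sum_of_injOn (fun t => (n - m * t, m * t)) ?_ ?_ ?_ ?_).symm
  · intro t _ t' _ h
    exact Nat.eq_of_mul_eq_mul_left hm' (congrArg Prod.snd h)
  · intro t ht
    have := (lt_div_add_one_iff_mul_le hm').1 (Finset.mem_range.1 ht)
    simp only [Finset.mem_coe, Finset.HasAntidiagonal.mem_antidiagonal]
    omega
  · rintro ⟨i, j⟩ hij hnot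
    rw [Finset.HasAntidiagonal.mem_antidiagonal] at hij
    dsimp only at hij
    rw [coeff_expand_of_not_dvd, mul_zero]
    rintro ⟨t, rfl⟩
    refine hnot ⟨t, Finset.mem_range.2 ((lt_div_add_one_iff_mul_le hm').2 (by omega)), ?_⟩
    simp only [Prod.mk.injEq, and_true]
    omega
  · intro t _
    rw [coeff_expand_mul]

theorem mk_coeff_mul_add_mul_expand {r : ℕ} (hr : r < m) (F G : R⟦X⟧) :
    mk (fun n => coeff (m * n + r) (F * expand m hm G)) =
      mk (fun n => coeff (m * n + r) F) * G := by
  ext n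
  have hdiv : (m * n + r) / m = n := by
    rw [Nat.mul_add_div (Nat.pos_of_ne_zero hm), Nat.div_eq_of_lt hr, add_zero]
  rw [coeff_mk, coeff_mul_expand, hdiv, mul_comm (mk _), coeff_mul,
    Finset.Nat.sum_antidiagonal_eq_sum_range_succ fun i j => coeff i G * coeff j _]
  refine Finset.sum_congr rfl fun t ht => ?_
  have : m * t ≤ m * n := Nat.mul_le_mul_left m (Nat.lt_succ_iff.1 (Finset.mem_range.1 ht))
  rw [mul_comm, coeff_mk, Nat.mul_sub, show m * n + r - m * t = m * n - m * t + r by omega]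

end expand

theorem coeff_mk_one_mul_expand_two {R : Type*} [CommRing R] (k : ℕ) :
    coeff k (mk 1 * expand 2 two_ne_zero (mk 1) : R⟦X⟧) = (k / 2 + 1 : ℕ) := by
  simp [coeff_mul_expand]

theorem one_add_X_mul_expand_two_mk_one {R : Type*} [CommRing R] :
    (1 + X) * expand 2 two_ne_zero (mk 1 : R⟦X⟧) = mk 1 :=
  calc (1 + X) * expand 2 two_ne_zero (mk 1 : R⟦X⟧)
      = (1 + X) * expand 2 two_ne_zero (mk 1) * (mk 1 * (1 - X)) := by
        rw [mk_one_mul_one_sub_eq_one, mul_one]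
    _ = expand 2 two_ne_zero (mk 1 * (1 - X)) * mk 1 := by
        rw [map_mul, map_sub, map_one, expand_X]; ring
    _ = mk 1 := by rw [mk_one_mul_one_sub_eq_one, map_one, one_mul]

theorem mk_coeff_mul_add_pred_mk_one_mul_expand_two {m : ℕ} (hodd : Odd m) :
    mk (fun n => coeff (m * n + (m - 1)) (mk 1 * expand 2 two_ne_zero (mk 1) : (ZMod m)⟦X⟧)) =
      C (((m + 1) / 2 : ℕ) : ZMod m) * expand 2 two_ne_zero (mk 1) := by
  obtain ⟨k, rfl⟩ := hodd
  have hm : ((2 * k + 1 : ℕ) : ZMod (2 * k + 1)) = 0 := ZMod.natCast_self _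
  ext n
  rw [coeff_mk, coeff_mk_one_mul_expand_two, coeff_C_mul, coeff_expand, coeff_mk,
    show (2 * k + 1 + 1) / 2 = k + 1 by omega]
  obtain ⟨s, rfl | rfl⟩ := Nat.even_or_odd' n
  · rw [if_pos (dvd_mul_right 2 s), Pi.one_apply, mul_one,
      show ((2 * k + 1) * (2 * s) + (2 * k + 1 - 1)) / 2 + 1 = (2 * k + 1) * s + (k + 1) by
        rw [Nat.add_sub_cancel,
          show (2 * k + 1) * (2 * s) + 2 * k = 2 * ((2 * k + 1) * s + k) by ring]
        omega,
      Nat.cast_add, Nat.cast_mul, hm, zero_mul, zero_add]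
  · rw [if_neg (by omega), mul_zero,
      show ((2 * k + 1) * (2 * s + 1) + (2 * k + 1 - 1)) / 2 + 1 = (2 * k + 1) * s + (2 * k + 1) by
        rw [Nat.add_sub_cancel,
          show (2 * k + 1) * (2 * s + 1) + 2 * k = 2 * ((2 * k + 1) * s + 2 * k) + 1 by ring]
        omega,
      Nat.cast_add, Nat.cast_mul, hm, zero_mul, add_zero]

theorem sum_range_choose_mul_one_sub_pow_three {A : Type*} [CommRing A] (x : A) (N : ℕ) :
    (∑ j ∈ Finset.range N, (Nat.choose (j + 2) 2 : A) * x ^ j) * (1 - x) ^ 3 =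
      1 - Nat.choose (N + 2) 2 * x ^ N + (N * (N + 2) : A) * x ^ (N + 1)
        - Nat.choose (N + 1) 2 * x ^ (N + 2) := by
  induction N with
  | zero => simp
  | succ N ih =>
    have h₁ := congrArg (Nat.cast : ℕ → A) (Nat.choose_succ_succ' (N + 1) 1)
    have h₂ := congrArg (Nat.cast : ℕ → A) (Nat.add_one_mul_choose_eq (N + 1) 1)
    have h₃ := congrArg (Nat.cast : ℕ → A) (Nat.choose_succ_succ' (N + 2) 1)
    rw [Finset.sum_range_succ, add_mul, ih]
    simp only [Nat.choose_one_right, add_assoc, Nat.reduceAdd] at h₁ h₂ h₃ ⊢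
    push_cast at h₁ h₂ h₃ ⊢
    linear_combination (x ^ (N + 1) - x ^ (N + 2)) * h₂ + x ^ (N + 2) * h₁ + x ^ (N + 1) * h₃

theorem sum_range_choose_mul_expand_mk_one {m : ℕ} (hodd : Odd m) :
    (∑ j ∈ Finset.range (m - 1), C (Nat.choose (j + 2) 2 : ZMod m) * X ^ j) *
      expand m hodd.pos.ne' (mk 1) = mk 1 ^ 3 := by
  have htrunc : (∑ j ∈ Finset.range (m - 1), C (Nat.choose (j + 2) 2 : ZMod m) * X ^ j) *
      (1 - X) ^ 3 = 1 - X ^ m := by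
    obtain ⟨k, rfl⟩ := hodd
    have hm : ((2 * k + 1 : ℕ) : (ZMod (2 * k + 1))⟦X⟧) = 0 := by
      rw [← map_natCast C, ZMod.natCast_self, map_zero]
    have h₁ : Nat.choose (2 * k + 2) 2 = (2 * k + 1) * (k + 1) := by
      rw [Nat.choose_two_right, show (2 * k + 2) * (2 * k + 2 - 1) = 2 * ((2 * k + 1) * (k + 1)) by
        rw [show 2 * k + 2 - 1 = 2 * k + 1 by omega]; ring]
      omega
    have h₂ : Nat.choose (2 * k + 1) 2 = (2 * k + 1) * k := by
      rw [Nat.choose_two_right, show (2 * k + 1) * (2 * k + 1 - 1) = 2 * ((2 * k + 1) * k) by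
        rw [Nat.add_sub_cancel]; ring]
      omega
    simp only [map_natCast]
    rw [sum_range_choose_mul_one_sub_pow_three, Nat.add_sub_cancel, h₁, h₂]
    push_cast at hm ⊢
    linear_combination
      (-(k + 1) * X ^ (2 * k) + (2 * k + 1) * X ^ (2 * k + 1) - k * X ^ (2 * k + 2)) * hm
  calc _ = (∑ j ∈ Finset.range (m - 1), C (Nat.choose (j + 2) 2 : ZMod m) * X ^ j) *
        expand m hodd.pos.ne' (mk 1) * (mk 1 * (1 - X)) ^ 3 := by
        rw [mk_one_mul_one_sub_eq_one, one_pow, mul_one]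
    _ = (1 - X ^ m) * expand m hodd.pos.ne' (mk 1) * mk 1 ^ 3 := by rw [← htrunc]; ring
    _ = expand m hodd.pos.ne' (mk 1 * (1 - X)) * mk 1 ^ 3 := by
        rw [map_mul, map_sub, map_one, expand_X]; ring
    _ = mk 1 ^ 3 := by rw [mk_one_mul_one_sub_eq_one, map_one, one_mul]

def IsPowOrTwicePow (m x : ℕ) : Prop := ∃ k : ℕ, x = m ^ k ∨ x = 2 * m ^ k

namespace IsPowOrTwicePow
variable {m x : ℕ}

theorem one : IsPowOrTwicePow m 1 := ⟨0, .inl (pow_zero m).symm⟩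

theorem two : IsPowOrTwicePow m 2 := ⟨0, .inr (by rw [pow_zero, mul_one])⟩

theorem eq_one_or_eq_two_of_not_dvd (h : IsPowOrTwicePow m x) (hx : ¬ m ∣ x) :
    x = 1 ∨ x = 2 := by
  obtain ⟨_ | k, rfl | rfl⟩ := h
  · exact .inl (pow_zero m)
  · exact .inr (by rw [pow_zero, mul_one])
  · exact absurd (dvd_pow_self m k.succ_ne_zero) hx
  · exact absurd ((dvd_pow_self m k.succ_ne_zero).mul_left 2) hx

theorem mul_left (h : IsPowOrTwicePow m x) : IsPowOrTwicePow m (m * x) := by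
  obtain ⟨k, hk⟩ := h
  exact ⟨k + 1, by rw [pow_succ', mul_left_comm]; rcases hk with rfl | rfl <;> simp⟩

theorem mul_left_iff (hm : 2 < m) : IsPowOrTwicePow m (m * x) ↔ IsPowOrTwicePow m x := by
  constructor
  · rintro ⟨_ | k, hk⟩
    · simp only [pow_zero, mul_one] at hk
      rcases hk with h | h <;>
        exact absurd (Dvd.intro x h) (Nat.not_dvd_of_pos_of_lt (by norm_num) (by omega))
    · rw [pow_succ', mul_left_comm] at hk
      exact ⟨k, by simpa only [Nat.mul_left_cancel_iff (by omega : 0 < m)] using hk⟩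
  · exact mul_left

end IsPowOrTwicePow

def assembleParts (m a b : ℕ) (q : Multiset ℕ) : Multiset ℕ :=
  Multiset.replicate a 1 + Multiset.replicate b 2 + q.map (m * ·)

section assembleParts
variable {m : ℕ} (a b : ℕ) (q : Multiset ℕ)

theorem sum_assembleParts : (assembleParts m a b q).sum = a + 2 * b + m * q.sum := by
  rw [assembleParts, Multiset.sum_add, Multiset.sum_add, Multiset.sum_replicate,
    Multiset.sum_replicate, Multiset.sum_map_mul_left, Multiset.map_id', smul_eq_mul, smul_eq_mul,
    mul_one, mul_comm b]

theorem forall_mem_assembleParts {P : ℕ → Prop} (h1 : P 1) (h2 : P 2)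
    (hq : ∀ y ∈ q, P (m * y)) : ∀ x ∈ assembleParts m a b q, P x := by
  simp only [assembleParts, Multiset.mem_add, Multiset.mem_replicate, Multiset.mem_map]
  rintro x ((⟨-, rfl⟩ | ⟨-, rfl⟩) | ⟨y, hy, rfl⟩)
  exacts [h1, h2, hq y hy]

variable (hm : 2 < m)
include hm

theorem filter_dvd_assembleParts :
    (assembleParts m a b q).filter (m ∣ ·) = q.map (m * ·) := by
  simp [assembleParts, Multiset.filter_add, Multiset.filter_eq_nil.2, Multiset.mem_replicate,
    Multiset.filter_eq_self.2, Nat.not_dvd_of_pos_of_lt one_pos (hm.trans' one_lt_two),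
    Nat.not_dvd_of_pos_of_lt two_pos hm]

theorem count_two_assembleParts : (assembleParts m a b q).count 2 = b := by
  have : ∀ y, m * y ≠ 2 := fun y h => Nat.not_dvd_of_pos_of_lt two_pos hm (Dvd.intro y h)
  simp [assembleParts, Multiset.count_replicate, this]

theorem assembleParts_decompose {s : Multiset ℕ} (hs : ∀ x ∈ s, IsPowOrTwicePow m x) :
    assembleParts m (s.count 1) (s.count 2) ((s.filter (m ∣ ·)).map (· / m)) = s := by
  have hmap : ((s.filter (m ∣ ·)).map (· / m)).map (m * ·) = s.filter (m ∣ ·) := by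
    rw [Multiset.map_map]
    exact (Multiset.map_congr rfl fun x hx => Nat.mul_div_cancel' (Multiset.of_mem_filter hx)).trans
      (Multiset.map_id _)
  ext x
  simp only [assembleParts, hmap, Multiset.count_add, Multiset.count_replicate,
    Multiset.count_filter]
  rcases eq_or_ne x 1 with rfl | hx1
  · simp [Nat.not_dvd_of_pos_of_lt one_pos (hm.trans' one_lt_two)]
  rcases eq_or_ne x 2 with rfl | hx2
  · simp [Nat.not_dvd_of_pos_of_lt two_pos hm]
  rw [if_neg hx1.symm, if_neg hx2.symm, zero_add, zero_add]
  split_ifs with hx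
  · rfl
  · refine (Multiset.count_eq_zero.2 fun hxs => ?_).symm
    exact ((hs x hxs).eq_one_or_eq_two_of_not_dvd hx).elim hx1 hx2

end assembleParts

abbrev PowOrTwicePowPartition (m n : ℕ) : Type :=
  {p : n.Partition // ∀ x ∈ p.parts, IsPowOrTwicePow m x}

/-- `t` is the sum of the parts divisible by `m`, divided by `m`, and `b` the number of twos; the
ones make up the rest. -/
def assemblePartition {m : ℕ} (hm : 0 < m) (n : ℕ) :
    (Σ t : Fin (n / m + 1), Fin ((n - m * t) / 2 + 1) × PowOrTwicePowPartition m t) →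
      PowOrTwicePowPartition m n
  | ⟨t, b, q⟩ =>
    ⟨⟨assembleParts m (n - m * t - 2 * b) b q.1.parts,
      fun hx => forall_mem_assembleParts _ _ _ one_pos two_pos
        (fun _ hy => Nat.mul_pos hm (q.1.parts_pos hy)) _ hx,
      by
        have ht := (lt_div_add_one_iff_mul_le hm).1 t.2
        have hb := b.2
        rw [sum_assembleParts, q.1.parts_sum]
        omega⟩,
    forall_mem_assembleParts _ _ _ IsPowOrTwicePow.one IsPowOrTwicePow.two
      fun y hy => IsPowOrTwicePow.mul_left (q.2 y hy)⟩

section assemblePartition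
variable {m : ℕ} (hm : 2 < m) (n : ℕ)
include hm

theorem assemblePartition_injective :
    Function.Injective (assemblePartition (zero_lt_two.trans hm) n) := by
  rintro ⟨t₁, b₁, q₁⟩ ⟨t₂, b₂, q₂⟩ h
  have hparts : assembleParts m _ b₁ q₁.1.parts = assembleParts m _ b₂ q₂.1.parts :=
    congrArg (fun p => p.1.parts) h
  have hq : q₁.1.parts = q₂.1.parts :=
    Multiset.map_injective (mul_right_injective₀ (by omega : m ≠ 0)) <| by
      rw [← filter_dvd_assembleParts _ _ _ hm, hparts, filter_dvd_assembleParts _ _ _ hm]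
  have hb : (b₁ : ℕ) = b₂ := by
    rw [← count_two_assembleParts _ b₁ _ hm, hparts, count_two_assembleParts _ _ _ hm]
  have ht : (t₁ : ℕ) = t₂ := by
    rw [← q₁.1.parts_sum, ← q₂.1.parts_sum, hq]
  obtain rfl := Fin.ext ht
  obtain rfl := Fin.ext hb
  obtain rfl := Subtype.ext (Nat.Partition.ext hq)
  rfl

theorem assemblePartition_surjective :
    Function.Surjective (assemblePartition (zero_lt_two.trans hm) n) := by
  rintro ⟨p, hp⟩
  set q := (p.parts.filter (m ∣ ·)).map (· / m)
  have hq : ∀ y ∈ q, 0 < y ∧ IsPowOrTwicePow m y := by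
    intro y hy
    obtain ⟨x, hx, rfl⟩ := Multiset.mem_map.1 hy
    obtain ⟨hxp, c, rfl⟩ := Multiset.mem_filter.1 hx
    rw [Nat.mul_div_cancel_left c (by omega : 0 < m)]
    exact ⟨Nat.pos_of_mul_pos_left (p.parts_pos hxp),
      (IsPowOrTwicePow.mul_left_iff hm).1 (hp _ hxp)⟩
  have hdecomp := assembleParts_decompose hm hp
  have hsum : p.parts.count 1 + 2 * p.parts.count 2 + m * q.sum = n := by
    rw [← sum_assembleParts, hdecomp, p.parts_sum]
  refine ⟨⟨⟨q.sum, (lt_div_add_one_iff_mul_le (by omega)).2 (by omega)⟩,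
    ⟨p.parts.count 2, show _ < (n - m * q.sum) / 2 + 1 by omega⟩,
    ⟨⟨q, fun hy => (hq _ hy).1, rfl⟩, fun y hy => (hq y hy).2⟩⟩, ?_⟩
  refine Subtype.ext (Nat.Partition.ext ?_)
  change assembleParts m (n - m * q.sum - 2 * p.parts.count 2) (p.parts.count 2) q = p.parts
  rw [show n - m * q.sum - 2 * p.parts.count 2 = p.parts.count 1 by omega, hdecomp]

theorem maryTwicePartitions_eq_sum :
    maryTwicePartitions m n =
      ∑ t ∈ Finset.range (n / m + 1), ((n - m * t) / 2 + 1) * maryTwicePartitions m t := by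
  rw [← Fin.sum_univ_eq_sum_range (fun t => ((n - m * t) / 2 + 1) * maryTwicePartitions m t)]
  refine (Nat.card_eq_of_bijective _
    ⟨assemblePartition_injective hm n, assemblePartition_surjective hm n⟩).symm.trans ?_
  rw [Nat.card_sigma]
  simp only [Nat.card_prod, Nat.card_eq_fintype_card, Fintype.card_fin]
  rfl

end assemblePartition

theorem mk_maryTwicePartitions {R : Type*} [CommRing R] {m : ℕ} (hm : 2 < m) :
    (mk fun n => (maryTwicePartitions m n : R)) =
      mk 1 * expand 2 two_ne_zero (mk 1) *
        expand m (by omega) (mk fun n => (maryTwicePartitions m n : R)) := by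
  ext n
  rw [coeff_mk, coeff_mul_expand, maryTwicePartitions_eq_sum hm, Nat.cast_sum]
  refine Finset.sum_congr rfl fun t _ => ?_
  rw [coeff_mk_one_mul_expand_two, coeff_mk, Nat.cast_mul]

theorem D_functional_equation_odd (m : ℕ) (hm : 1 < m) (hodd : Odd m) :
    let d : ℕ → ℕ := fun n => maryTwicePartitions m (m * (n + 1) - 1)
    let D : PowerSeries (ZMod m) := PowerSeries.mk fun n => (d n : ZMod m)
    D = (1 + X) *
        (∑ j ∈ Finset.range (m - 1),
          PowerSeries.C ((Nat.choose (j + 2) 2 : ZMod m)) * X ^ (2 * j)) *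
      substPow (ZMod m) m D := by
  intro d D
  have hm0 : m ≠ 0 := hodd.pos.ne'
  have hm2 : 2 < m := by obtain ⟨k, rfl⟩ := hodd; omega
  set c : (ZMod m)⟦X⟧ := mk fun n => (maryTwicePartitions m n : ZMod m)
  set G : (ZMod m)⟦X⟧ := mk 1
  set S := ∑ j ∈ Finset.range (m - 1), C (Nat.choose (j + 2) 2 : ZMod m) * X ^ j
  set μ : ZMod m := (((m + 1) / 2 : ℕ) : ZMod m)
  have hc : c = G * expand 2 two_ne_zero G * expand m hm0 c := mk_maryTwicePartitions hm2
  have hD : D = C μ * expand 2 two_ne_zero G * c := by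
    have : D = mk fun n => coeff (m * n + (m - 1)) c := by
      ext n
      simp only [D, d, c, coeff_mk,
        show m * (n + 1) - 1 = m * n + (m - 1) by rw [Nat.mul_succ]; omega]
    rw [this]
    conv_lhs => rw [hc]
    rw [mk_coeff_mul_add_mul_expand hm0 (by omega),
      mk_coeff_mul_add_pred_mk_one_mul_expand_two hodd]
  have hS : ∑ j ∈ Finset.range (m - 1), C (Nat.choose (j + 2) 2 : ZMod m) * X ^ (2 * j) =
      expand 2 two_ne_zero S := by
    simp only [S, map_sum, map_mul, expand_C, map_pow, expand_X, pow_mul]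
  have hkey : expand 2 two_ne_zero S * expand m hm0 (expand 2 two_ne_zero G) =
      expand 2 two_ne_zero G ^ 3 := by
    simp only [← expand_mul, Nat.mul_comm m 2]
    rw [expand_mul 2 two_ne_zero m hm0, ← map_mul, sum_range_choose_mul_expand_mk_one hodd,
      map_pow]
  rw [substPow_eq_expand hm0, hS, hD, map_mul, map_mul, expand_C]
  linear_combination (C μ * expand 2 two_ne_zero G) * hc
    - ((1 + X) * C μ * expand m hm0 c) * hkey
    - (C μ * expand 2 two_ne_zero G ^ 2 * expand m hm0 c) *
      one_add_X_mul_expand_two_mk_one (R := ZMod m)
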